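/- arXiv:math/0011188 — 2 statements merged into one kernel-verified Lean document; each statement's English description precedes it below -/
import Mathlib

section
/- Let (Ω, μ) be a probability space, X, Y : Ω → ℝ integrable, t ∈ ℝ, δ > 0, and η ≥ 0. Suppose E|X − t| ≤ e + η, E|Y − t| ≤ e + η, and E|(X + Y)/2 − t| ≥ e − η for some real e. Then μ{ω : X(ω) ≥ t + δ and Y(ω) ≤ t − δ} ≤ 2η/δ. -/
/-!
The defect `g = |X - t|/2 + |Y - t|/2 - |(X + Y)/2 - t|` of the convexity of `|· - t|` is
nonnegative, at least `δ` wherever `X` and `Y` lie on opposite sides of `t` at distance `δ`,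
and by the hypotheses its expectation is at most `(e + η) - (e - η) = 2η`.
Markov's inequality for `g` gives the bound.
-/

open MeasureTheory

noncomputable def absConvexityGap (t a b : ℝ) : ℝ := |a - t| / 2 + |b - t| / 2 - |(a + b) / 2 - t|

theorem absConvexityGap_nonneg (t a b : ℝ) : 0 ≤ absConvexityGap t a b := by
  have h := abs_add_le (a - t) (b - t)
  rw [absConvexityGap, show (a + b) / 2 - t = ((a - t) + (b - t)) / 2 by ring, abs_div,
    abs_two]
  linarith

theorem le_absConvexityGap {t a b δ : ℝ} (hδ : 0 ≤ δ) (ha : t + δ ≤ a) (hb : b ≤ t - δ) :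
    δ ≤ absConvexityGap t a b := by
  have hmid : |(a + b) / 2 - t| ≤ (a - t) / 2 + (t - b) / 2 - δ :=
    abs_le'.2 ⟨by linarith, by linarith⟩
  rw [absConvexityGap, abs_of_nonneg (by linarith : 0 ≤ a - t),
    abs_of_nonpos (by linarith : b - t ≤ 0)]
  linarith

section Integral

variable {Ω : Type*} [MeasurableSpace Ω] {μ : Measure Ω} [IsFiniteMeasure μ]
  {X Y : Ω → ℝ}

theorem integrable_abs_sub_const (hX : Integrable X μ) (t : ℝ) :
    Integrable (fun ω ↦ |X ω - t|) μ :=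
  (hX.sub (integrable_const t)).abs

theorem integral_absConvexityGap (hX : Integrable X μ) (hY : Integrable Y μ) (t : ℝ) :
    ∫ ω, absConvexityGap t (X ω) (Y ω) ∂μ =
      (∫ ω, |X ω - t| ∂μ) / 2 + (∫ ω, |Y ω - t| ∂μ) / 2 - ∫ ω, |(X ω + Y ω) / 2 - t| ∂μ := by
  have hXt := (integrable_abs_sub_const hX t).div_const 2
  have hYt := (integrable_abs_sub_const hY t).div_const 2
  have hM : Integrable (fun ω ↦ |(X ω + Y ω) / 2 - t|) μ :=
    integrable_abs_sub_const ((hX.add hY).div_const 2) t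
  have hXYt : Integrable (fun ω ↦ |X ω - t| / 2 + |Y ω - t| / 2) μ := hXt.add hYt
  simp only [absConvexityGap]
  rw [integral_sub hXYt hM, integral_add hXt hYt, integral_div, integral_div]

theorem integrable_absConvexityGap (hX : Integrable X μ) (hY : Integrable Y μ) (t : ℝ) :
    Integrable (fun ω ↦ absConvexityGap t (X ω) (Y ω)) μ :=
  (((integrable_abs_sub_const hX t).div_const 2).add
    ((integrable_abs_sub_const hY t).div_const 2)).sub
    (integrable_abs_sub_const ((hX.add hY).div_const 2) t)

end Integral

theorem measure_le_ofReal_div_of_le_on {α : Type*} [MeasurableSpace α] {μ : Measure α}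
    [IsFiniteMeasure μ] {f : α → ℝ} {s : Set α} {δ c : ℝ} (hf : 0 ≤ᵐ[μ] f)
    (hfi : Integrable f μ) (hδ : 0 < δ) (hs : ∀ x ∈ s, δ ≤ f x) (hc : ∫ x, f x ∂μ ≤ c) :
    μ s ≤ ENNReal.ofReal (c / δ) :=
  calc μ s ≤ μ {x | δ ≤ f x} := measure_mono hs
    _ = ENNReal.ofReal (μ.real {x | δ ≤ f x}) := (ofReal_measureReal (measure_ne_top _ _)).symm
    _ ≤ ENNReal.ofReal (c / δ) := ENNReal.ofReal_le_ofReal <|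
      (le_div_iff₀' hδ).2 ((mul_meas_ge_le_integral_of_nonneg hf hfi δ).trans hc)

theorem straddle_event_small_general
    {Ω : Type*} [MeasurableSpace Ω] (μ : Measure Ω) [IsProbabilityMeasure μ]
    (X Y : Ω → ℝ)
    (hXi : Integrable X μ) (hYi : Integrable Y μ)
    (t δ η e : ℝ) (hδ : 0 < δ)
    (hX : ∫ ω, |X ω - t| ∂μ ≤ e + η)
    (hY : ∫ ω, |Y ω - t| ∂μ ≤ e + η)
    (hXY : ∫ ω, |(X ω + Y ω)/2 - t| ∂μ ≥ e - η) :
    μ {ω | X ω ≥ t + δ ∧ Y ω ≤ t - δ} ≤ ENNReal.ofReal (2 * η / δ) := by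
  have hgap : ∫ ω, absConvexityGap t (X ω) (Y ω) ∂μ ≤ 2 * η := by
    rw [integral_absConvexityGap hXi hYi]
    linarith
  exact measure_le_ofReal_div_of_le_on
    (Filter.Eventually.of_forall fun ω ↦ absConvexityGap_nonneg t (X ω) (Y ω))
    (integrable_absConvexityGap hXi hYi t) hδ (fun ω hω ↦ le_absConvexityGap hδ.le hω.1 hω.2) hgap

/-- Measure-theoretic core of Subclaim 3 of the Main Lemma. -/
theorem straddle_event_small
    {Ω : Type*} [MeasurableSpace Ω] (μ : Measure Ω) [IsProbabilityMeasure μ]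
    (X Y : Ω → ℝ) (hXm : Measurable X) (hYm : Measurable Y)
    (hXi : Integrable X μ) (hYi : Integrable Y μ)
    (t δ η e : ℝ) (hδ : 0 < δ) (hη : 0 ≤ η)
    (hX : ∫ ω, |X ω - t| ∂μ ≤ e + η)
    (hY : ∫ ω, |Y ω - t| ∂μ ≤ e + η)
    (hXY : ∫ ω, |(X ω + Y ω)/2 - t| ∂μ ≥ e - η) :
    μ {ω | X ω ≥ t + δ ∧ Y ω ≤ t - δ} ≤ ENNReal.ofReal (2 * η / δ) :=
  straddle_event_small_general μ X Y hXi hYi t δ η e hδ hX hY hXY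
end

section
/- The splitting number 𝔰 is a lower bound for the matrix chaos number χ: if F ⊆ 2^ω is a family such that for every Toeplitz matrix A some f ∈ F has A lim f undefined (i.e., F witnesses χ), then F, viewed as a family of subsets of ω via characteristic functions, is a splitting family; hence 𝔰 ≤ χ. -/
/-!
A witness `F` for `χ` splits every infinite `X`: otherwise each `f ∈ F` is eventually constant
along an injective enumeration of `X`, so the Toeplitz matrix selecting those columns makes
every `A · f` convergent.

For `𝔰 ≤ χ` the set defining `χ` must also be nonempty (`sInf ∅ = 0`), which is the Steinhaus
theorem: no Toeplitz matrix sums every `0`-`1` sequence. Pick rows `r k` and cut points `n k` so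
that row `r k` carries almost all of its mass, with total close to `1`, on the block
`[n k, n (k + 1))`; the indicator of the odd blocks then makes `(A · f) (r k)` alternate between
values near `0` and near `1`.
-/

open Filter Topology

/-- A regular (Toeplitz) matrix. -/
def IsToeplitz (A : ℕ → ℕ → ℝ) : Prop :=
  (∀ i, Summable fun j => |A i j|) ∧
  (∃ m : ℝ, ∀ i, ∑' j, |A i j| < m) ∧
  Tendsto (fun i => ∑' j, A i j) atTop (𝓝 1) ∧
  (∀ j, Tendsto (fun i => A i j) atTop (𝓝 0))

/-- `A lim f` exists. -/
def ALimExists (A : ℕ → ℕ → ℝ) (f : ℕ → ℝ) : Prop :=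
  ∃ L : ℝ, Tendsto (fun i => ∑' j, A i j * f j) atTop (𝓝 L)

/-- `S` splits `X`: both `X ∩ S` and `X \ S` are infinite. -/
def Splits (S X : Set ℕ) : Prop := (X ∩ S).Infinite ∧ (X \ S).Infinite

/-- The splitting number 𝔰. -/
noncomputable def splittingNumber : Cardinal :=
  sInf { c | ∃ S : Set (Set ℕ), Cardinal.mk S = c ∧
    ∀ X : Set ℕ, X.Infinite → ∃ s ∈ S, Splits s X }

/-- The matrix chaos number χ (for 0-1 valued sequences). -/
noncomputable def chiNumber : Cardinal :=
  sInf { c | ∃ F : Set (ℕ → ℝ), (∀ f ∈ F, ∀ n, f n = 0 ∨ f n = 1) ∧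
    Cardinal.mk F = c ∧
    ∀ A : ℕ → ℕ → ℝ, IsToeplitz A → ∃ f ∈ F, ¬ ALimExists A f }

section Estimates

variable {a h : ℕ → ℝ}

lemma abs_mul_le_abs_of_abs_le_one {x y : ℝ} (hy : |y| ≤ 1) : |x * y| ≤ |x| := by
  rw [abs_mul]
  exact mul_le_of_le_one_right (abs_nonneg x) hy

lemma summable_abs_mul_of_abs_le_one (ha : Summable fun j => |a j|) (hh : ∀ j, |h j| ≤ 1) :
    Summable fun j => |a j * h j| :=
  .of_nonneg_of_le (fun _ => abs_nonneg _) (fun j => abs_mul_le_abs_of_abs_le_one (hh j)) ha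

lemma abs_tsum_mul_le_of_eq_zero_on_Ico {m n : ℕ} (hmn : m ≤ n) (ha : Summable fun j => |a j|)
    (hh : ∀ j, |h j| ≤ 1) (hzero : ∀ j ∈ Finset.Ico m n, h j = 0) :
    |∑' j, a j * h j| ≤ ∑ j ∈ Finset.range m, |a j| + ∑' j, |a (j + n)| := by
  have hle : ∀ j, |a j * h j| ≤ |a j| := fun j => abs_mul_le_abs_of_abs_le_one (hh j)
  have hs := summable_abs_mul_of_abs_le_one ha hh
  have hmid : ∑ j ∈ Finset.Ico m n, |a j * h j| = 0 :=
    Finset.sum_eq_zero fun j hj => by simp [hzero j hj]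
  calc |∑' j, a j * h j| ≤ ∑' j, |a j * h j| := by
        simpa only [Real.norm_eq_abs] using norm_tsum_le_tsum_norm (f := fun j => a j * h j) hs
    _ = ∑ j ∈ Finset.range m, |a j * h j| + ∑' j, |a (j + n) * h (j + n)| := by
        rw [← hs.sum_add_tsum_nat_add n, ← Finset.sum_range_add_sum_Ico _ hmn, hmid, add_zero]
    _ ≤ ∑ j ∈ Finset.range m, |a j| + ∑' j, |a (j + n)| :=
        add_le_add (Finset.sum_le_sum fun j _ => hle j)
          (Summable.tsum_le_tsum (fun j => hle (j + n)) ((summable_nat_add_iff n).2 hs)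
            ((summable_nat_add_iff n).2 ha))

lemma abs_tsum_mul_sub_le_of_eqOn_Ico {f : ℕ → ℝ} {c : ℝ} {m n : ℕ} (hmn : m ≤ n)
    (ha : Summable fun j => |a j|) (hf : ∀ j, |f j| ≤ 1) (hfc : ∀ j, |f j - c| ≤ 1)
    (hblock : ∀ j ∈ Finset.Ico m n, f j = c) :
    |∑' j, a j * f j - c * ∑' j, a j| ≤ ∑ j ∈ Finset.range m, |a j| + ∑' j, |a (j + n)| := by
  have hsplit : ∑' j, a j * f j - c * ∑' j, a j = ∑' j, a j * (f j - c) := by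
    simp_rw [mul_sub]
    rw [(summable_abs_mul_of_abs_le_one ha hf).of_abs.tsum_sub, ← tsum_mul_left]
    · simp_rw [mul_comm c]
    · simpa only [mul_comm] using ha.of_abs.mul_left c
  rw [hsplit]
  exact abs_tsum_mul_le_of_eq_zero_on_Ico hmn ha hfc fun j hj => sub_eq_zero.2 (hblock j hj)

end Estimates

lemma not_tendsto_of_frequently_le_of_frequently_ge {α β : Type*} [TopologicalSpace β]
    [LinearOrder β] [OrderClosedTopology β] {l : Filter α} {u : α → β} {a b L : β} (hab : a < b)
    (hle : ∃ᶠ x in l, u x ≤ a) (hge : ∃ᶠ x in l, b ≤ u x) : ¬ Tendsto u l (𝓝 L) := fun hL =>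
  (isClosed_Iic.mem_of_frequently_of_tendsto hle hL).not_gt
    (hab.trans_le (isClosed_Ici.mem_of_frequently_of_tendsto hge hL))

namespace IsToeplitz

variable {A : ℕ → ℕ → ℝ}

lemma exists_concentrated_row (hA : IsToeplitz A) {ε : ℝ} (hε : 0 < ε) (i₀ m : ℕ) :
    ∃ i > i₀, ∃ n > m, ∑ j ∈ Finset.range m, |A i j| < ε ∧ |∑' j, A i j - 1| < ε ∧
      ∑' j, |A i (j + n)| < ε := by
  obtain ⟨_, _, hrow, hcol⟩ := hA
  have hhead : Tendsto (fun i => ∑ j ∈ Finset.range m, |A i j|) atTop (𝓝 0) := by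
    simpa using tendsto_finsetSum (Finset.range m) fun j _ => (hcol j).abs
  have hsum : Tendsto (fun i => |∑' j, A i j - 1|) atTop (𝓝 0) := by
    simpa using (hrow.sub_const 1).abs
  obtain ⟨i, hi₀, hi_head, hi_sum⟩ := ((eventually_gt_atTop i₀).and
    ((hhead.eventually_lt_const hε).and (hsum.eventually_lt_const hε))).exists
  obtain ⟨n, hnm, hn_tail⟩ := ((eventually_gt_atTop m).and
    ((tendsto_sum_nat_add fun j => |A i j|).eventually_lt_const hε)).exists
  exact ⟨i, hi₀, n, hnm, hi_head, hi_sum, hn_tail⟩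

lemma exists_blocks (hA : IsToeplitz A) {ε : ℝ} (hε : 0 < ε) :
    ∃ r n : ℕ → ℕ, StrictMono r ∧ Monotone n ∧ ∀ k,
      ∑ j ∈ Finset.range (n k), |A (r k) j| < ε ∧ |∑' j, A (r k) j - 1| < ε ∧
        ∑' j, |A (r k) (j + n (k + 1))| < ε := by
  choose i hi n hn hrow using hA.exists_concentrated_row hε
  let s : ℕ → ℕ × ℕ := fun k => Nat.rec (0, 0) (fun _ p => (i p.1 p.2, n p.1 p.2)) k
  refine ⟨fun k => (s (k + 1)).1, fun k => (s k).2, strictMono_nat_of_lt_succ fun k => hi _ _,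
    monotone_nat_of_le_succ fun k => (hn _ _).le, fun k => hrow _ _⟩

theorem exists_zero_one_not_aLimExists (hA : IsToeplitz A) :
    ∃ f : ℕ → ℝ, (∀ j, f j = 0 ∨ f j = 1) ∧ ¬ ALimExists A f := by
  obtain ⟨r, n, hr, hn, hrow⟩ := hA.exists_blocks (ε := 1 / 6) (by norm_num)
  let S : Set ℕ := ⋃ k, ⋃ (_ : Odd k), Set.Ico (n k) (n (k + 1))
  have hS : ∀ k, ∀ j ∈ Set.Ico (n k) (n (k + 1)), (j ∈ S ↔ Odd k) := by
    intro k j hj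
    simp only [S, Set.mem_iUnion, exists_prop]
    refine ⟨fun ⟨k', hk', hj'⟩ => ?_, fun hk => ⟨k, hk, hj⟩⟩
    obtain rfl : k' = k := by
      by_contra hne
      exact Set.disjoint_left.1 (hn.pairwise_disjoint_on_Ico_succ hne) hj' hj
    exact hk'
  let f := S.indicator (1 : ℕ → ℝ)
  have hf01 : ∀ j, f j = 0 ∨ f j = 1 := fun j => by
    by_cases hj : j ∈ S <;> simp [f, hj]
  have hf : ∀ j, |f j| ≤ 1 := fun j => by rcases hf01 j with h | h <;> simp [h]
  have hf1 : ∀ j, |f j - 1| ≤ 1 := fun j => by rcases hf01 j with h | h <;> simp [h]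
  refine ⟨f, hf01, fun ⟨L, hL⟩ => ?_⟩
  have hestimate (k : ℕ) (c : ℝ) (hfc : ∀ j, |f j - c| ≤ 1)
      (hblock : ∀ j ∈ Finset.Ico (n k) (n (k + 1)), f j = c) :
      |∑' j, A (r k) j * f j - c * ∑' j, A (r k) j| < 1 / 3 := by
    obtain ⟨hhead, -, htail⟩ := hrow k
    have := abs_tsum_mul_sub_le_of_eqOn_Ico (hn k.le_succ) (hA.1 (r k)) hf hfc hblock
    linarith
  have heven : ∀ k, Even k → ∑' j, A (r k) j * f j ≤ 1 / 3 := fun k hk => by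
    have := hestimate k 0 (by simpa using hf) fun j hj => Set.indicator_of_notMem
      (mt ((hS k j (Finset.mem_Ico.1 hj)).1) (Nat.not_odd_iff_even.2 hk)) _
    rw [zero_mul, sub_zero] at this
    exact (abs_lt.1 this).2.le
  have hodd : ∀ k, Odd k → 1 / 2 ≤ ∑' j, A (r k) j * f j := fun k hk => by
    have := hestimate k 1 hf1 fun j hj => Set.indicator_of_mem
      ((hS k j (Finset.mem_Ico.1 hj)).2 hk) _
    have hsum := (hrow k).2.1
    rw [one_mul] at this
    linarith [(abs_lt.1 this).1, (abs_lt.1 hsum).1]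
  exact not_tendsto_of_frequently_le_of_frequently_ge (by norm_num : (1 / 3 : ℝ) < 1 / 2)
    (frequently_atTop.2 fun k => ⟨2 * k, by omega, heven _ (even_two_mul k)⟩)
    (frequently_atTop.2 fun k => ⟨2 * k + 1, by omega, hodd _ (odd_two_mul_add_one k)⟩)
    (hL.comp hr.tendsto_atTop)

end IsToeplitz

def selectionMatrix (e : ℕ → ℕ) : ℕ → ℕ → ℝ := fun i j => if j = e i then 1 else 0

lemma tsum_selectionMatrix_mul (e : ℕ → ℕ) (f : ℕ → ℝ) (i : ℕ) :
    ∑' j, selectionMatrix e i j * f j = f (e i) := by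
  simp only [selectionMatrix, ite_mul, one_mul, zero_mul]
  exact tsum_ite_eq (e i) f

lemma isToeplitz_selectionMatrix {e : ℕ → ℕ} (he : Tendsto e atTop atTop) :
    IsToeplitz (selectionMatrix e) := by
  have habs : ∀ i j, |selectionMatrix e i j| = selectionMatrix e i j := fun i j => by
    by_cases h : j = e i <;> simp [selectionMatrix, h]
  have hrow : ∀ i, ∑' j, selectionMatrix e i j = 1 := fun i => by
    simpa using tsum_selectionMatrix_mul e 1 i
  refine ⟨fun i => ?_, ⟨2, fun i => ?_⟩, ?_, fun j => ?_⟩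
  · exact summable_of_ne_finset_zero (s := {e i}) fun j hj => by
      simp_all [selectionMatrix]
  · simp_rw [habs, hrow]
    norm_num
  · simp_rw [hrow]
    exact tendsto_const_nhds
  · refine tendsto_const_nhds.congr' ?_
    filter_upwards [he.eventually_gt_atTop j] with i hi
    simp [selectionMatrix, hi.ne]

lemma eventually_const_of_not_splits {f : ℕ → ℝ} (hf : ∀ n, f n = 0 ∨ f n = 1) {X : Set ℕ}
    {e : ℕ → ℕ} (he : Tendsto e atTop cofinite) (heX : ∀ i, e i ∈ X)
    (hsplit : ¬ Splits {n | f n = 1} X) : ∃ c, ∀ᶠ i in atTop, f (e i) = c := by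
  rw [Splits, not_and_or, Set.not_infinite, Set.not_infinite] at hsplit
  rcases hsplit with hfin | hfin
  · refine ⟨0, (he.eventually hfin.eventually_cofinite_notMem).mono fun i hi => ?_⟩
    exact (hf (e i)).resolve_right fun h1 => hi ⟨heX i, h1⟩
  · exact ⟨1, (he.eventually hfin.eventually_cofinite_notMem).mono fun i hi => not_not.1
      fun h1 => hi ⟨heX i, h1⟩⟩

theorem exists_splits_of_forall_not_aLimExists {F : Set (ℕ → ℝ)}
    (h01 : ∀ f ∈ F, ∀ n, f n = 0 ∨ f n = 1)
    (hF : ∀ A : ℕ → ℕ → ℝ, IsToeplitz A → ∃ f ∈ F, ¬ ALimExists A f)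
    {X : Set ℕ} (hX : X.Infinite) : ∃ f ∈ F, Splits {n | f n = 1} X := by
  let e : ℕ → ℕ := fun i => hX.natEmbedding X i
  have he : Tendsto e atTop cofinite := Nat.cofinite_eq_atTop ▸
    ((Subtype.val_injective.comp (hX.natEmbedding X).injective).tendsto_cofinite)
  obtain ⟨f, hfF, hf⟩ :=
    hF _ (isToeplitz_selectionMatrix (Nat.cofinite_eq_atTop ▸ he : Tendsto e atTop atTop))
  by_contra! hunsplit
  obtain ⟨c, hc⟩ := eventually_const_of_not_splits (h01 f hfF) he
    (fun i => (hX.natEmbedding X i).2) (hunsplit f hfF)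
  exact hf ⟨c, tendsto_const_nhds.congr' (hc.mono fun i hi => by
    simp only [tsum_selectionMatrix_mul, hi])⟩

/-- Every witness for χ is (via characteristic functions) a splitting family;
hence 𝔰 ≤ χ. -/
theorem splitting_le_chi :
    (∀ F : Set (ℕ → ℝ), (∀ f ∈ F, ∀ n, f n = 0 ∨ f n = 1) →
      (∀ A : ℕ → ℕ → ℝ, IsToeplitz A → ∃ f ∈ F, ¬ ALimExists A f) →
      ∀ X : Set ℕ, X.Infinite → ∃ f ∈ F, Splits {n | f n = 1} X) ∧
    splittingNumber ≤ chiNumber := by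
  refine ⟨fun F h01 hF X hX => exists_splits_of_forall_not_aLimExists h01 hF hX, ?_⟩
  obtain ⟨F, h01, hFχ, hF⟩ : chiNumber ∈ {c | ∃ F : Set (ℕ → ℝ),
      (∀ f ∈ F, ∀ n, f n = 0 ∨ f n = 1) ∧ Cardinal.mk F = c ∧
      ∀ A : ℕ → ℕ → ℝ, IsToeplitz A → ∃ f ∈ F, ¬ ALimExists A f} :=
    csInf_mem ⟨_, {f | ∀ n, f n = 0 ∨ f n = 1}, fun _ hf => hf, rfl,
      fun A hA => hA.exists_zero_one_not_aLimExists⟩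
  let S := (fun f : ℕ → ℝ => {n | f n = 1}) '' F
  have hS : ∀ X : Set ℕ, X.Infinite → ∃ s ∈ S, Splits s X := fun X hX => by
    obtain ⟨f, hfF, hf⟩ := exists_splits_of_forall_not_aLimExists h01 hF hX
    exact ⟨_, Set.mem_image_of_mem _ hfF, hf⟩
  calc splittingNumber ≤ Cardinal.mk S := csInf_le' ⟨S, rfl, hS⟩
    _ ≤ Cardinal.mk F := Cardinal.mk_image_le
    _ = chiNumber := hFχ
end
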